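/- arXiv:2105.00513 — 2 statements merged into one kernel-verified Lean document; each statement's English description precedes it below -/
import Mathlib

section
/- Let q be a prime power. For every integer k with q+1 ≤ k ≤ 2q−2 there exists an almost MDS Hermitian self-orthogonal linear code over F_{q^2} with parameters [q^2+1, k, q^2+1−k]. -/
/-
Coordinates are indexed by the projective line `F ∪ {∞}`, modelled as `Option F`. The code
consists of the vectors `(P(x))_{x ∈ F}` extended by `γ • P_k` at `∞`, where `P` runs over the
`k`-dimensional space of polynomials of degree `≤ k` whose coefficient of `X ^ (q - 1)` is `t`
times that of `X ^ k`. For `a, b ≤ 2q - 2`, the sum `∑_{x ∈ F} x ^ (a + b q)` vanishes except at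
`(a, b) = (q - 1, q - 1)` and `(2q - 2, 2q - 2)`, where it is `-1`; hence the Hermitian form on
the code is `(γ ^ (q + 1) - t ^ (q + 1) - [k = 2q - 2]) P_k Q_k ^ q`, which vanishes for a
suitable `γ ≠ 0`. A nonzero polynomial of degree `≤ k` has at most `k` roots, so every nonzero
codeword has weight `≥ q² + 1 - k`, and `(X ^ d - 1) ∏_{b ∈ B} (X - b)` with `d = q ± 1`, having
exactly `k` roots in `F`, is a codeword attaining this bound that also fixes `t` and `γ`.
-/

/-- The Hermitian inner product `⟨x,y⟩ₕ = ∑ i, x i * (y i)^q` on `Fin n → F`. -/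
def hermInner (q : ℕ) {F : Type} [Field F] {n : ℕ} (x y : Fin n → F) : F :=
  ∑ i, x i * y i ^ q

/-- The Hermitian dual of a set `C` of codewords:
`C^{⊥ₕ} = {y | ∀ x ∈ C, ⟨x,y⟩ₕ = 0}`. -/
def hermDual (q : ℕ) {F : Type} [Field F] {n : ℕ} (C : Set (Fin n → F)) :
    Set (Fin n → F) :=
  {y | ∀ x ∈ C, hermInner q x y = 0}

/-- A linear code `C` is Hermitian self-orthogonal if `C ⊆ C^{⊥ₕ}`. -/
def IsHermSelfOrth (q : ℕ) {F : Type} [Field F] {n : ℕ}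
    (C : Submodule F (Fin n → F)) : Prop :=
  (C : Set (Fin n → F)) ⊆ hermDual q (C : Set (Fin n → F))

/-- The dimension of the Hermitian hull `Hull_h(C) = C ∩ C^{⊥ₕ}` of a linear code `C`
(the hull is a linear subspace, so taking the span does not change it). -/
noncomputable def hermHullDim (q : ℕ) {F : Type} [Field F] {n : ℕ}
    (C : Submodule F (Fin n → F)) : ℕ :=
  Module.finrank F
    (Submodule.span F ((C : Set (Fin n → F)) ∩ hermDual q (C : Set (Fin n → F))))

/-- `d` is the minimum Hamming distance of the set `S` of codewords, i.e. the least
Hamming weight of a nonzero element of `S`. -/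
def HasMinDist {F : Type} [Field F] [DecidableEq F] {n : ℕ}
    (S : Set (Fin n → F)) (d : ℕ) : Prop :=
  IsLeast {w | ∃ x ∈ S, x ≠ 0 ∧ hammingNorm x = w} d

open Polynomial Finset

theorem FiniteField.sum_pow_eq_ite {F : Type*} [Field F] [Fintype F] (m : ℕ) :
    ∑ x : F, x ^ m = if m ≠ 0 ∧ Fintype.card F - 1 ∣ m then -1 else 0 := by
  classical
  rcases eq_or_ne m 0 with rfl | hm
  · simp
  simp only [ne_eq, hm, not_false_eq_true, true_and, ← FiniteField.sum_pow_units]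
  let e : Fˣ ↪ F := ⟨Units.val, Units.val_injective⟩
  refine (Finset.sum_subset (Finset.subset_univ _) fun x _ hx => ?_).symm.trans
    (Finset.sum_map Finset.univ e (· ^ m))
  obtain rfl : x = 0 := by
    by_contra h
    exact hx (Finset.mem_map.mpr ⟨Units.mk0 x h, Finset.mem_univ _, rfl⟩)
  exact zero_pow hm

theorem FiniteField.exists_isPrimitiveRoot_of_dvd {F : Type*} [Field F] [Fintype F] {d : ℕ}
    (hd : d ∣ Fintype.card F - 1) : ∃ ζ : F, IsPrimitiveRoot ζ d := by
  classical
  have hN : Fintype.card F - 1 ≠ 0 := by have := Fintype.one_lt_card (α := F); omega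
  have hd0 : d ≠ 0 := by rintro rfl; exact hN (Nat.eq_zero_of_zero_dvd hd)
  obtain ⟨g, hg⟩ := IsCyclic.exists_ofOrder_eq_natCard (α := Fˣ)
  rw [Nat.card_eq_fintype_card, Fintype.card_units] at hg
  have hζ := IsPrimitiveRoot.orderOf (g ^ ((Fintype.card F - 1) / d))
  rw [orderOf_pow_of_dvd (Nat.div_ne_zero_iff_of_dvd hd |>.mpr ⟨hN, hd0⟩)
    (by rw [hg]; exact Nat.div_dvd_of_dvd hd), hg, Nat.div_div_self hd hN] at hζ
  exact ⟨_, IsPrimitiveRoot.coe_units_iff.mpr hζ⟩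

theorem exists_expChar_pow_eq_of_card_eq_sq {F : Type*} [Field F] [Fintype F] {q : ℕ}
    (hq : IsPrimePow q) (hF : Fintype.card F = q ^ 2) :
    ∃ p e : ℕ, ExpChar F p ∧ q = p ^ e := by
  obtain ⟨p, e, hp, he, rfl⟩ := hq
  have hp := hp.nat_prime
  have hp0 : (p : F) = 0 := by
    have h := FiniteField.cast_card_eq_zero F
    rw [hF, Nat.cast_pow, Nat.cast_pow] at h
    exact pow_eq_zero_iff (by omega) |>.mp (pow_eq_zero_iff two_ne_zero |>.mp h)
  have := (CharP.charP_iff_prime_eq_zero hp).mpr hp0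
  exact ⟨p, e, .prime hp, rfl⟩

theorem sq_sub_one_dvd_add_mul_iff {q a b : ℕ} (hq : 2 ≤ q) (ha : a ≤ 2 * q - 2)
    (hb : b ≤ 2 * q - 2) :
    (a + b * q ≠ 0 ∧ q ^ 2 - 1 ∣ a + b * q) ↔
      (a = q - 1 ∧ b = q - 1) ∨ (a = 2 * q - 2 ∧ b = 2 * q - 2) := by
  obtain ⟨s, rfl⟩ : ∃ s, q = s + 2 := ⟨q - 2, by omega⟩
  have hsq : (s + 2) ^ 2 - 1 = (s + 1) * (s + 3) := by
    rw [Nat.sub_eq_of_eq_add]; ring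
  simp only [hsq, show 2 * (s + 2) - 2 = 2 * s + 2 by omega, show s + 2 - 1 = s + 1 by omega]
    at ha hb ⊢
  constructor
  · rintro ⟨h0, c, hc⟩
    have hc2 : c ≤ 2 := by
      by_contra! h
      nlinarith [Nat.mul_le_mul_left ((s + 1) * (s + 3)) h, Nat.mul_le_mul_right (s + 2) hb]
    interval_cases c
    · omega
    · obtain hb' | rfl | hb' : b ≤ s ∨ b = s + 1 ∨ s + 2 ≤ b := by omega
      · nlinarith [Nat.mul_le_mul_right (s + 2) hb']
      · left; constructor <;> nlinarith
      · nlinarith [Nat.mul_le_mul_right (s + 2) hb']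
    · obtain hb' | rfl : b ≤ 2 * s + 1 ∨ b = 2 * s + 2 := by omega
      · nlinarith [Nat.mul_le_mul_right (s + 2) hb']
      · right; constructor <;> nlinarith
  · rintro (⟨rfl, rfl⟩ | ⟨rfl, rfl⟩)
    · exact ⟨by omega, 1, by ring⟩
    · exact ⟨by omega, 2, by ring⟩

section HermitianSums

variable {F : Type*} [Field F] [Fintype F] {q : ℕ}

theorem two_le_of_card_eq_sq (hF : Fintype.card F = q ^ 2) : 2 ≤ q := by
  have := Fintype.one_lt_card (α := F)
  by_contra! h
  interval_cases q <;> simp_all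

theorem sum_pow_mul_pow_pow (hF : Fintype.card F = q ^ 2) {a b : ℕ} (ha : a ≤ 2 * q - 2)
    (hb : b ≤ 2 * q - 2) :
    ∑ x : F, x ^ a * (x ^ b) ^ q =
      if (a = q - 1 ∧ b = q - 1) ∨ (a = 2 * q - 2 ∧ b = 2 * q - 2) then -1 else 0 := by
  simp only [← pow_mul, ← pow_add, FiniteField.sum_pow_eq_ite, hF,
    sq_sub_one_dvd_add_mul_iff (two_le_of_card_eq_sq hF) ha hb]

theorem sum_eval_mul_eval_pow {p e : ℕ} [ExpChar F p] (hq : q = p ^ e)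
    (hF : Fintype.card F = q ^ 2) {P Q : F[X]} (hP : P.natDegree ≤ 2 * q - 2)
    (hQ : Q.natDegree ≤ 2 * q - 2) :
    ∑ x : F, P.eval x * Q.eval x ^ q =
      -(P.coeff (q - 1) * Q.coeff (q - 1) ^ q + P.coeff (2 * q - 2) * Q.coeff (2 * q - 2) ^ q) := by
  have h2 := two_le_of_card_eq_sq hF
  set R := range (2 * q - 1) with hR
  have hPR : ∀ x : F, P.eval x = ∑ a ∈ R, P.coeff a * x ^ a := eval_eq_sum_range' (by omega)
  have hQR : ∀ x : F, Q.eval x ^ q = ∑ b ∈ R, Q.coeff b ^ q * (x ^ b) ^ q := fun x => by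
    rw [eval_eq_sum_range' (n := 2 * q - 1) (by omega), hq, sum_pow_char_pow, ← hq, ← hR]
    simp only [mul_pow]
  have hRle : ∀ a ∈ R, a ≤ 2 * q - 2 := fun a ha => by rw [hR, mem_range] at ha; omega
  calc ∑ x : F, P.eval x * Q.eval x ^ q
      = ∑ x : F, ∑ a ∈ R, ∑ b ∈ R, P.coeff a * Q.coeff b ^ q * (x ^ a * (x ^ b) ^ q) := by
        refine sum_congr rfl fun x _ => ?_
        rw [hPR, hQR, sum_mul_sum]
        exact sum_congr rfl fun a _ => sum_congr rfl fun b _ => by ring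
    _ = ∑ a ∈ R, ∑ b ∈ R, P.coeff a * Q.coeff b ^ q * ∑ x : F, x ^ a * (x ^ b) ^ q := by
        simp_rw [mul_sum]
        rw [sum_comm]
        exact sum_congr rfl fun a _ => sum_comm
    _ = ∑ ab ∈ R ×ˢ R, P.coeff ab.1 * Q.coeff ab.2 ^ q *
          if (ab.1 = q - 1 ∧ ab.2 = q - 1) ∨ (ab.1 = 2 * q - 2 ∧ ab.2 = 2 * q - 2)
          then -1 else 0 := by
        rw [sum_product]
        refine sum_congr rfl fun a ha => sum_congr rfl fun b hb => ?_
        rw [sum_pow_mul_pow_pow hF (hRle a ha) (hRle b hb)]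
    _ = _ := by
        rw [sum_eq_add_of_mem (q - 1, q - 1) (2 * q - 2, 2 * q - 2)
          (by simp [hR]; omega) (by simp [hR]; omega) (by simp; omega)]
        · simp only [and_self, true_or, or_true, if_true]
          ring
        · rintro ⟨a, b⟩ _ hab
          rw [if_neg (by grind), mul_zero]

end HermitianSums

section TiltedCode

variable {F : Type} [Field F]

noncomputable def tiltedPolys (k m : ℕ) (t : F) : Submodule F F[X] :=
  degreeLE F k ⊓ LinearMap.ker (lcoeff F m - t • lcoeff F k)

theorem mem_tiltedPolys {k m : ℕ} {t : F} {P : F[X]} :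
    P ∈ tiltedPolys k m t ↔ P.natDegree ≤ k ∧ P.coeff m = t * P.coeff k := by
  simp [tiltedPolys, mem_degreeLE, natDegree_le_iff_degree_le, sub_eq_zero]

theorem finrank_tiltedPolys {k m : ℕ} (hm : m < k) (t : F) :
    Module.finrank F (tiltedPolys k m t) = k := by
  set ℓ := (lcoeff F m - t • lcoeff F k) ∘ₗ (degreeLE F k).subtype
  have hV : tiltedPolys k m t = (LinearMap.ker ℓ).map (degreeLE F k).subtype := by
    rw [LinearMap.ker_comp, Submodule.map_comap_subtype, tiltedPolys]
  have hsurj : LinearMap.range ℓ = ⊤ := by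
    refine LinearMap.range_eq_top.mpr fun y => ⟨⟨C y * X ^ m, ?_⟩, ?_⟩
    · rw [mem_degreeLE]; compute_degree!; exact WithBot.coe_le_coe.mpr hm.le
    · simp [ℓ, coeff_C_mul, coeff_X_pow, hm.ne']
  have hdim : Module.finrank F (degreeLE F k) = k + 1 := by
    rw [← degreeLT_succ_eq_degreeLE, (degreeLTEquiv F (k + 1)).finrank_eq, Module.finrank_fin_fun]
  have := Module.finite_of_finrank_pos (by omega : 0 < Module.finrank F (degreeLE F k))
  have := LinearMap.finrank_range_add_finrank_ker ℓ
  rw [hsurj, finrank_top, Module.finrank_self, hdim] at this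
  rw [hV, Submodule.finrank_map_subtype_eq]
  omega

noncomputable def extendedEval (k : ℕ) (γ : F) : Option F → F[X] →ₗ[F] F
  | none => γ • lcoeff F k
  | some x => leval x

noncomputable def extendedEvalVec {n : ℕ} (σ : Fin n ≃ Option F) (k : ℕ) (γ : F) :
    F[X] →ₗ[F] Fin n → F :=
  LinearMap.pi fun j => extendedEval k γ (σ j)

noncomputable def tiltedCode {n : ℕ} (σ : Fin n ≃ Option F) (k m : ℕ) (t γ : F) :
    Submodule F (Fin n → F) :=
  (tiltedPolys k m t).map (extendedEvalVec σ k γ)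

variable {n : ℕ} (σ : Fin n ≃ Option F) {k : ℕ} {γ : F}

theorem sum_extendedEvalVec [Fintype F] {M : Type*} [AddCommMonoid M] (g : F → F → M)
    (P Q : F[X]) :
    ∑ j, g (extendedEvalVec σ k γ P j) (extendedEvalVec σ k γ Q j) =
      g (γ * P.coeff k) (γ * Q.coeff k) + ∑ x : F, g (P.eval x) (Q.eval x) := by
  rw [← Equiv.sum_comp σ.symm, Fintype.sum_option]
  simp [extendedEvalVec, extendedEval]

theorem hermInner_extendedEvalVec [Fintype F] (q : ℕ) (P Q : F[X]) :
    hermInner q (extendedEvalVec σ k γ P) (extendedEvalVec σ k γ Q) =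
      γ * P.coeff k * (γ * Q.coeff k) ^ q + ∑ x : F, P.eval x * Q.eval x ^ q :=
  sum_extendedEvalVec σ (fun a b => a * b ^ q) P Q

theorem isHermSelfOrth_tiltedCode [Fintype F] {p e q : ℕ} [ExpChar F p] (hq : q = p ^ e)
    (hF : Fintype.card F = q ^ 2) (hk : k ≤ 2 * q - 2) {t : F}
    (hγ : γ * γ ^ q = t * t ^ q + if k = 2 * q - 2 then 1 else 0) :
    IsHermSelfOrth q (tiltedCode σ k (q - 1) t γ) := by
  rintro _ ⟨Q, hQ, rfl⟩ _ ⟨P, hP, rfl⟩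
  rw [SetLike.mem_coe, mem_tiltedPolys] at hP hQ
  rw [hermInner_extendedEvalVec, sum_eval_mul_eval_pow hq hF (hP.1.trans hk) (hQ.1.trans hk),
    hP.2, hQ.2]
  rcases eq_or_ne k (2 * q - 2) with rfl | hk'
  · rw [if_pos rfl] at hγ
    linear_combination (P.coeff (2 * q - 2) * Q.coeff (2 * q - 2) ^ q) * hγ
  · rw [if_neg hk', add_zero] at hγ
    have hk'' : k < 2 * q - 2 := lt_of_le_of_ne hk hk'
    rw [coeff_eq_zero_of_natDegree_lt (hP.1.trans_lt hk''),
      coeff_eq_zero_of_natDegree_lt (hQ.1.trans_lt hk'')]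
    linear_combination (P.coeff k * Q.coeff k ^ q) * hγ

theorem hammingNorm_extendedEvalVec [Fintype F] [DecidableEq F] (P : F[X]) :
    hammingNorm (extendedEvalVec σ k γ P) =
      (if γ * P.coeff k ≠ 0 then 1 else 0) + #{x | P.eval x ≠ 0} := by
  simp only [hammingNorm, Finset.card_filter]
  exact sum_extendedEvalVec σ (fun a _ => if a ≠ 0 then 1 else 0) P P

theorem card_filter_eval_eq_zero_le [Fintype F] [DecidableEq F] {P : F[X]} (hP : P ≠ 0) :
    #{x | P.eval x = 0} ≤ P.natDegree :=
  card_le_degree_of_subset_roots fun _ hx => (mem_roots hP).mpr (Finset.mem_filter.mp hx).2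

theorem card_filter_eval_ne_zero [Fintype F] [DecidableEq F] (P : F[X]) :
    #{x | P.eval x ≠ 0} = Fintype.card F - #{x | P.eval x = 0} := by
  have := Finset.card_filter_add_card_filter_not (s := Finset.univ) fun x => P.eval x = 0
  rw [Finset.card_univ] at this
  simp only [ne_eq]
  omega

theorem le_hammingNorm_extendedEvalVec [Fintype F] [DecidableEq F] (hγ : γ ≠ 0) {P : F[X]}
    (hP : P ≠ 0) (hPk : P.natDegree ≤ k) :
    Fintype.card F + 1 - k ≤ hammingNorm (extendedEvalVec σ k γ P) := by
  rw [hammingNorm_extendedEvalVec, card_filter_eval_ne_zero]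
  have hzeros := card_filter_eval_eq_zero_le hP
  by_cases hc : P.coeff k = 0
  · have : P.natDegree ≠ k := fun h =>
      hP (leadingCoeff_eq_zero.mp (by rw [leadingCoeff, h]; exact hc))
    simp only [hc, mul_zero, ne_eq, not_true_eq_false, if_false]
    omega
  · rw [if_pos (mul_ne_zero hγ hc)]
    omega

theorem eq_zero_of_extendedEvalVec_eq_zero [Fintype F] {P : F[X]}
    (hP : extendedEvalVec σ k γ P = 0) (hdeg : P.natDegree < Fintype.card F) : P = 0 :=
  eq_zero_of_natDegree_lt_card_of_eval_eq_zero P Function.injective_id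
    (fun x => by simpa [extendedEvalVec, extendedEval] using congrFun hP (σ.symm (some x))) hdeg

theorem finrank_tiltedCode [Fintype F] {m : ℕ} (hm : m < k) (hk : k < Fintype.card F) (t : F) :
    Module.finrank F (tiltedCode σ k m t γ) = k := by
  rw [tiltedCode, ← LinearMap.range_domRestrict, LinearMap.finrank_range_of_inj,
    finrank_tiltedPolys hm]
  refine (injective_iff_map_eq_zero _).mpr fun ⟨P, hP⟩ h => Subtype.ext ?_
  exact eq_zero_of_extendedEvalVec_eq_zero σ h
    ((mem_tiltedPolys.mp hP).1.trans_lt hk)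

theorem hasMinDist_tiltedCode [Fintype F] [DecidableEq F] {m : ℕ} {t : F} (hγ : γ ≠ 0)
    {f : F[X]} (hf : f ∈ tiltedPolys k m t) (hfk : f.coeff k ≠ 0)
    (hzeros : k ≤ #{x | f.eval x = 0}) :
    HasMinDist (tiltedCode σ k m t γ : Set (Fin n → F)) (Fintype.card F + 1 - k) := by
  constructor
  · refine ⟨extendedEvalVec σ k γ f, ⟨f, hf, rfl⟩, fun h => ?_, ?_⟩
    · simpa [extendedEvalVec, extendedEval, hγ, hfk] using congrFun h (σ.symm none)
    · have hf0 : f ≠ 0 := fun h => hfk (by simp [h])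
      have := (card_filter_eval_eq_zero_le hf0).trans (mem_tiltedPolys.mp hf).1
      have := Finset.card_filter_le Finset.univ fun x => f.eval x = 0
      rw [hammingNorm_extendedEvalVec, if_pos (mul_ne_zero hγ hfk), card_filter_eval_ne_zero]
      rw [Finset.card_univ] at this
      omega
  · rintro w ⟨_, ⟨P, hP, rfl⟩, hP0, rfl⟩
    exact le_hammingNorm_extendedEvalVec σ hγ (fun h => hP0 (h ▸ map_zero _))
      (mem_tiltedPolys.mp hP).1

end TiltedCode

theorem exists_monic_card_zeros_X_pow_sub_one_mul {F : Type*} [Field F] [Fintype F]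
    [DecidableEq F] {d k : ℕ} (hd : d ∣ Fintype.card F - 1) (hdk : d ≤ k)
    (hk : k < Fintype.card F) :
    ∃ G : F[X], G.natDegree = k - d ∧ G.coeff 0 ≠ 0 ∧ ((X ^ d - 1) * G).Monic ∧
      ((X ^ d - 1) * G).natDegree = k ∧ #{x | ((X ^ d - 1) * G).eval x = 0} = k := by
  obtain ⟨ζ, hζ⟩ := FiniteField.exists_isPrimitiveRoot_of_dvd hd
  have hd0 : 0 < d := Nat.pos_of_ne_zero fun h => by
    have := Fintype.one_lt_card (α := F)
    simp [h] at hd; omega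
  set μ := nthRootsFinset d (1 : F)
  have hroom : k - d ≤ #(univ \ insert 0 μ) := by
    have := card_insert_le (0 : F) μ
    rw [card_sdiff_of_subset (subset_univ _), card_univ]
    rw [hζ.card_nthRootsFinset] at this
    omega
  obtain ⟨B, hBsub, hB⟩ := exists_subset_card_eq hroom
  have hB0 : ∀ b ∈ B, b ≠ 0 ∧ b ∉ μ := fun b hb => by
    simpa [not_or] using hBsub hb
  have hXd : (X ^ d - 1 : F[X]).Monic := by simpa using monic_X_pow_sub_C (1 : F) hd0.ne'
  have hG : (∏ b ∈ B, (X - C b)).Monic := monic_prod_of_monic _ _ fun b _ => monic_X_sub_C b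
  have hGdeg : (∏ b ∈ B, (X - C b)).natDegree = k - d := by
    rw [natDegree_prod_of_monic _ _ fun b _ => monic_X_sub_C b]
    simp [hB]
  refine ⟨∏ b ∈ B, (X - C b), hGdeg, ?_, hXd.mul hG, ?_, ?_⟩
  · rw [coeff_zero_eq_eval_zero, eval_prod, prod_ne_zero_iff]
    intro b hb
    simpa using (hB0 b hb).1
  · have hXdeg : (X ^ d - 1 : F[X]).natDegree = d := by
      simpa using natDegree_X_pow_sub_C (n := d) (r := (1 : F))
    rw [hXd.natDegree_mul hG, hGdeg, hXdeg]
    omega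
  · have hzeros :
        ({x | ((X ^ d - 1) * ∏ b ∈ B, (X - C b)).eval x = 0} : Finset F) = μ ∪ B := by
      ext x
      simp [μ, mem_nthRootsFinset hd0, eval_prod, prod_eq_zero_iff, sub_eq_zero]
    rw [hzeros, card_union_of_disjoint (disjoint_right.mpr fun b hb => (hB0 b hb).2),
      hζ.card_nthRootsFinset, hB]
    omega

/-- The coefficient `t` of `X ^ (q - 1)` in `f = (X ^ d - 1) * G` is `G(0) ≠ 0` for `d = q - 1`
(then `γ = t`) and `0` for `d = q + 1` (then `γ = 1`). -/
theorem exists_monic_card_zeros_norm_coeff {F : Type} [Field F] [Fintype F] [DecidableEq F]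
    {q k : ℕ} (hF : Fintype.card F = q ^ 2) (hk1 : q + 1 ≤ k) (hk2 : k ≤ 2 * q - 2) :
    ∃ f : F[X], f.Monic ∧ f.natDegree = k ∧ #{x | f.eval x = 0} = k ∧
      ∃ γ : F, γ ≠ 0 ∧
        γ * γ ^ q = f.coeff (q - 1) * f.coeff (q - 1) ^ q + if k = 2 * q - 2 then 1 else 0 := by
  have hkF : k < Fintype.card F := by
    rw [hF]; nlinarith [show k < 2 * q by omega, show 2 ≤ q by omega]
  have hcard : Fintype.card F - 1 = (q - 1) * (q + 1) := by
    rw [hF, Nat.sub_eq_of_eq_add]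
    obtain ⟨s, rfl⟩ : ∃ s, q = s + 1 := ⟨q - 1, by omega⟩
    simp only [Nat.add_sub_cancel]; ring
  have hcoeff : ∀ (d : ℕ) (G : F[X]), ((X ^ d - 1) * G).coeff (q - 1) =
      (if d ≤ q - 1 then G.coeff (q - 1 - d) else 0) - G.coeff (q - 1) := fun d G => by
    rw [sub_mul, one_mul, coeff_sub, coeff_X_pow_mul']
  rcases eq_or_ne k (2 * q - 2) with hk | hk
  · obtain ⟨G, hGdeg, -, hfm, hfdeg, hfz⟩ := exists_monic_card_zeros_X_pow_sub_one_mul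
      (d := q + 1) (hcard ▸ dvd_mul_left _ _) hk1 hkF
    refine ⟨_, hfm, hfdeg, hfz, 1, one_ne_zero, ?_⟩
    rw [hcoeff, if_neg (by omega), coeff_eq_zero_of_natDegree_lt (p := G) (n := q - 1) (by omega),
      if_pos hk]
    simp [zero_pow (by omega : q ≠ 0)]
  · obtain ⟨G, hGdeg, hG0, hfm, hfdeg, hfz⟩ := exists_monic_card_zeros_X_pow_sub_one_mul
      (d := q - 1) (hcard ▸ dvd_mul_right _ _) (by omega) hkF
    refine ⟨_, hfm, hfdeg, hfz, G.coeff 0, hG0, ?_⟩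
    rw [hcoeff, if_pos le_rfl, Nat.sub_self,
      coeff_eq_zero_of_natDegree_lt (p := G) (n := q - 1) (by omega), if_neg hk]
    ring

/-- For every `q+1 ≤ k ≤ 2q-2` there exists an almost MDS Hermitian
self-orthogonal `[q²+1, k, q²+1-k]` code over `F_{q²}`. -/
theorem amds_herm_self_orth_q_sq_add_one
    (q : ℕ) (hq : IsPrimePow q)
    (F : Type) [Field F] [Fintype F] [DecidableEq F]
    (hF : Fintype.card F = q ^ 2)
    (k : ℕ) (hk1 : q + 1 ≤ k) (hk2 : k ≤ 2 * q - 2) :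
    ∃ C : Submodule F (Fin (q ^ 2 + 1) → F),
      IsHermSelfOrth q C ∧ Module.finrank F C = k ∧
        HasMinDist (C : Set (Fin (q ^ 2 + 1) → F)) (q ^ 2 + 1 - k) := by
  obtain ⟨p, e, _, hpe⟩ := exists_expChar_pow_eq_of_card_eq_sq hq hF
  obtain ⟨f, hfm, hfdeg, hfz, γ, hγ0, hγ⟩ := exists_monic_card_zeros_norm_coeff hF hk1 hk2
  have hfk : f.coeff k = 1 := hfdeg ▸ hfm.coeff_natDegree
  have hf : f ∈ tiltedPolys k (q - 1) (f.coeff (q - 1)) :=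
    mem_tiltedPolys.mpr ⟨hfdeg.le, by rw [hfk, mul_one]⟩
  let σ : Fin (q ^ 2 + 1) ≃ Option F := Fintype.equivOfCardEq (by simp [hF])
  refine ⟨tiltedCode σ k (q - 1) (f.coeff (q - 1)) γ,
    isHermSelfOrth_tiltedCode σ hpe hF hk2 hγ, finrank_tiltedCode σ (by omega) ?_ _, ?_⟩
  · rw [hF]; nlinarith [show k < 2 * q by omega, show 2 ≤ q by omega]
  · simpa [hF] using hasMinDist_tiltedCode σ hγ0 hf (by rw [hfk]; exact one_ne_zero) hfz.ge
end

section
/- Let q be an odd prime power. Then: (i) there exists an almost MDS Hermitian self-orthogonal linear code over F_{q^2} with parameters [2(q+1)+2, 4, 2q]; and (ii) for every integer i with 2 ≤ i ≤ q there exists a Hermitian self-orthogonal linear code over F_{q^2} with parameters [2(q+1)+i, 2+i, d] for some d ≥ 2q+2−i. -/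
/-!
Let `ω` be a primitive `2(q+1)`-th root of unity in `F_{q²}` and `c` a norm preimage of `-2`,
`c ^ (q + 1) = -2`. The code consists of the words `(f(ω^j))_{j < 2(q+1)}` followed by
`(c f_{2j})_{j < i}`, for `deg f ≤ i + 1`. For `a, b ≤ q + 1` one has `2(q+1) ∣ a + q b` iff
`a = b` is even, so the evaluation part of `⟨f, g⟩ₕ` is `2 ∑_{a even} f_a g_a^q`, which the extra
coordinates cancel. A nonzero `f` has at most `i + 1` roots among the `ω^j`, and at most `i` if
`f(0) = 0`; if `f(0) ≠ 0` the first extra coordinate is nonzero. Hence the weight is at least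
`2q + 2 - i`. For `i = 2`, `X³ - X` vanishes at `±1` and on the extra coordinates, so it
has weight exactly `2q`.
-/

open Polynomial Finset

section Hamming

variable {ι β : Type*} [Fintype ι] [Zero β] [DecidableEq β]

lemma hammingNorm_append {m n : ℕ} (x : Fin m → β) (y : Fin n → β) :
    hammingNorm (Fin.append x y) = hammingNorm x + hammingNorm y := by
  simp only [hammingNorm, card_filter, Fin.sum_univ_add, Fin.append_left, Fin.append_right]

lemma hammingNorm_le_card_sub_card {x : ι → β} (s : Finset ι) (hs : ∀ i ∈ s, x i = 0) :
    hammingNorm x ≤ Fintype.card ι - #s := by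
  classical
  rw [← card_compl]
  exact card_le_card fun i hi => mem_compl.2 fun his => (mem_filter.1 hi).2 (hs i his)

end Hamming

lemma hermInner_append {F : Type} [Field F] (q : ℕ) {m n : ℕ} (x x' : Fin m → F)
    (y y' : Fin n → F) :
    hermInner q (Fin.append x y) (Fin.append x' y') = hermInner q x x' + hermInner q y y' := by
  simp only [hermInner, Fin.sum_univ_add, Fin.append_left, Fin.append_right]

section MinDist

variable {F : Type} [Field F] [DecidableEq F] {n : ℕ} {S : Set (Fin n → F)}

lemma exists_hasMinDist (hS : ∃ x ∈ S, x ≠ 0) : ∃ d, HasMinDist S d := by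
  obtain ⟨x, hx, hx0⟩ := hS
  have hW : {w | ∃ x ∈ S, x ≠ 0 ∧ hammingNorm x = w}.Nonempty := ⟨_, x, hx, hx0, rfl⟩
  exact ⟨_, Nat.sInf_mem hW, fun w hw => Nat.sInf_le hw⟩

lemma hasMinDist_hammingNorm {x₀ : Fin n → F} (hx₀ : x₀ ∈ S) (hx₀0 : x₀ ≠ 0)
    (h : ∀ x ∈ S, x ≠ 0 → hammingNorm x₀ ≤ hammingNorm x) : HasMinDist S (hammingNorm x₀) :=
  ⟨⟨x₀, hx₀, hx₀0, rfl⟩, fun _ ⟨x, hx, hx0, hw⟩ => hw ▸ h x hx hx0⟩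

end MinDist

section Evaluation

variable {F : Type} [Field F] [DecidableEq F] {κ : Type*} [Fintype κ] {P : κ → F}

lemma card_filter_eval_eq_zero_le_natDegree (hP : Function.Injective P) {f : F[X]}
    (hf : f ≠ 0) : #{k | f.eval (P k) = 0} ≤ f.natDegree := by
  rw [← card_image_of_injective _ hP]
  refine card_le_degree_of_subset_roots fun x hx => ?_
  obtain ⟨k, hk, rfl⟩ := mem_image.1 hx
  exact (mem_roots hf).2 (mem_filter.1 hk).2

lemma card_sub_natDegree_le_hammingNorm_eval (hP : Function.Injective P) {f : F[X]}
    (hf : f ≠ 0) : Fintype.card κ - f.natDegree ≤ hammingNorm fun k => f.eval (P k) := by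
  have hsplit := card_filter_add_card_filter_not (s := univ) (fun k => f.eval (P k) = 0)
  have := card_filter_eval_eq_zero_le_natDegree hP hf
  rw [card_univ] at hsplit
  simp only [hammingNorm, ne_eq] at hsplit ⊢
  omega

lemma card_add_one_sub_natDegree_le_hammingNorm_eval (hP : Function.Injective P)
    (hP0 : ∀ k, P k ≠ 0) {f : F[X]} (hf : f ≠ 0) (hf0 : f.coeff 0 = 0) :
    Fintype.card κ + 1 - f.natDegree ≤ hammingNorm fun k => f.eval (P k) := by
  obtain ⟨g, rfl⟩ := X_dvd_iff.2 hf0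
  have hg : g ≠ 0 := right_ne_zero_of_mul hf
  have hweight :
      (hammingNorm fun k => (X * g).eval (P k)) = hammingNorm fun k => g.eval (P k) := by
    simp only [eval_mul, eval_X]
    exact hammingNorm_comp (fun k y => P k * y) (fun k => mul_right_injective₀ (hP0 k))
      fun k => mul_zero _
  rw [natDegree_X_mul hg, hweight]
  have := card_sub_natDegree_le_hammingNorm_eval hP hg
  omega

end Evaluation

lemma Polynomial.natDegree_le_of_mem_degreeLT_succ {R : Type*} [Semiring R] {n : ℕ} {f : R[X]}
    (hf : f ∈ degreeLT R (n + 1)) : f.natDegree ≤ n := by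
  rw [degreeLT_succ_eq_degreeLE] at hf
  exact natDegree_le_of_degree_le (mem_degreeLE.1 hf)

section RootsOfUnity

variable {F : Type} [Field F]

lemma IsPrimitiveRoot.sum_fin_pow_pow {ω : F} {n : ℕ} (hω : IsPrimitiveRoot ω n) (m : ℕ) :
    ∑ j : Fin n, (ω ^ (j : ℕ)) ^ m = if n ∣ m then (n : F) else 0 := by
  simp_rw [← pow_mul, mul_comm _ m, pow_mul]
  rw [Fin.sum_univ_eq_sum_range (fun j => (ω ^ m) ^ j)]
  split_ifs with h
  · simp [(hω.pow_eq_one_iff_dvd m).2 h]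
  · rw [geom_sum_eq ((hω.pow_eq_one_iff_dvd m).not.2 h), ← pow_mul, mul_comm, pow_mul,
      hω.pow_eq_one, one_pow, sub_self, zero_div]

end RootsOfUnity

namespace FiniteField

variable {F : Type} [Field F] [Fintype F]

lemma exists_isPrimitiveRoot_of_dvd_card_sub_one {n : ℕ} (hn : n ∣ Fintype.card F - 1) :
    ∃ ω : F, IsPrimitiveRoot ω n := by
  obtain ⟨g, hg⟩ := IsCyclic.exists_ofOrder_eq_natCard (α := Fˣ)
  rw [Nat.card_units, Nat.card_eq_fintype_card] at hg
  have hθ : IsPrimitiveRoot (g : F) (Fintype.card F - 1) :=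
    IsPrimitiveRoot.coe_units_iff.2 (hg ▸ IsPrimitiveRoot.orderOf g)
  have hpos : 0 < Fintype.card F - 1 := by have := Fintype.one_lt_card (α := F); omega
  obtain ⟨a, ha⟩ := hn
  exact ⟨_, hθ.pow hpos (ha.trans (mul_comm n a))⟩

lemma exists_pow_eq_of_pow_eq_one {m n : ℕ} (hmn : Fintype.card F - 1 = m * n) {t : F}
    (ht : t ^ n = 1) : ∃ x : F, x ^ m = t := by
  obtain ⟨θ, hθ⟩ := exists_isPrimitiveRoot_of_dvd_card_sub_one (F := F) dvd_rfl
  have hpos : 0 < Fintype.card F - 1 := by have := Fintype.one_lt_card (α := F); omega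
  have : NeZero n := ⟨by rintro rfl; omega⟩
  obtain ⟨i, -, hi⟩ := (hθ.pow hpos hmn).eq_pow_of_pow_eq_one ht
  exact ⟨θ ^ i, by rw [← pow_mul, mul_comm, pow_mul, hi]⟩

lemma exists_pow_succ_eq_of_pow_eq_self {q : ℕ} (hF : Fintype.card F = q ^ 2) {t : F}
    (ht0 : t ≠ 0) (ht : t ^ q = t) : ∃ x : F, x ^ (q + 1) = t := by
  obtain _ | q := q
  · simp at hF
  refine exists_pow_eq_of_pow_eq_one (n := q) ?_ (mul_right_cancel₀ ht0 ?_)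
  · rw [hF]; ring_nf; omega
  · rw [← pow_succ, ht, one_mul]

lemma natCast_eq_zero_of_card_eq_pow {q m : ℕ} (hm : m ≠ 0) (hF : Fintype.card F = q ^ m) :
    (q : F) = 0 := by
  have h := cast_card_eq_zero F
  rw [hF, Nat.cast_pow] at h
  exact pow_eq_zero_iff hm |>.1 h

lemma exists_expChar_pow_eq {q m : ℕ} (hq : IsPrimePow q) (hm : m ≠ 0)
    (hF : Fintype.card F = q ^ m) : ∃ p k, ExpChar F p ∧ p ^ k = q := by
  obtain ⟨p, k, hp, hk, rfl⟩ := hq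
  have hp := Nat.prime_iff.2 hp
  have hp0 : (p : F) = 0 := by
    have h := natCast_eq_zero_of_card_eq_pow hm hF
    rw [Nat.cast_pow] at h
    exact pow_eq_zero_iff hk.ne' |>.1 h
  have := (CharP.charP_iff_prime_eq_zero hp).2 hp0
  exact ⟨p, k, ExpChar.prime hp, rfl⟩

lemma exists_isPrimitiveRoot_two_mul_succ {q : ℕ} (hodd : Odd q) (hF : Fintype.card F = q ^ 2) :
    ∃ ω : F, IsPrimitiveRoot ω (2 * (q + 1)) := by
  obtain ⟨r, rfl⟩ := hodd
  exact exists_isPrimitiveRoot_of_dvd_card_sub_one ⟨r, by rw [hF]; ring_nf; omega⟩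

lemma exists_pow_succ_eq_neg_two {p k q : ℕ} [ExpChar F p] (hq : p ^ k = q) (hodd : Odd q)
    (hF : Fintype.card F = q ^ 2) : ∃ c : F, c ≠ 0 ∧ c ^ (q + 1) = -2 := by
  have h2 : (2 : F) ≠ 0 := fun h => by
    have hq0 := natCast_eq_zero_of_card_eq_pow two_ne_zero hF
    obtain ⟨r, rfl⟩ := hodd
    simp [h] at hq0
  have hfix : (-2 : F) ^ q = -2 := by
    have h := map_neg (iterateFrobenius F p k) 2
    rwa [map_ofNat, iterateFrobenius_def, hq] at h
  obtain ⟨c, hc⟩ := exists_pow_succ_eq_of_pow_eq_self hF (neg_ne_zero.2 h2) hfix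
  refine ⟨c, ?_, hc⟩
  rintro rfl
  exact neg_ne_zero.2 h2 (by simpa using hc.symm)

end FiniteField

/-- Since `a + q * b = (q + 1) * b + (a - b)`, a quotient `t` forces `|2 * t - b| ≤ 1`. -/
lemma two_mul_succ_dvd_add_mul_iff {q a b : ℕ} (hq : Odd q) (ha : a ≤ q + 1) (hb : b ≤ q + 1) :
    2 * (q + 1) ∣ a + q * b ↔ a = b ∧ Even a := by
  constructor
  · rintro ⟨t, ht⟩
    obtain ⟨r, rfl⟩ := hq
    have h1 : b ≤ 2 * t + 1 := by nlinarith
    have h2 : 2 * t ≤ b + 1 := by nlinarith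
    obtain h | h | h : b = 2 * t + 1 ∨ b = 2 * t ∨ 2 * t = b + 1 := by omega
    · subst h; ring_nf at ht; omega
    · subst h; ring_nf at ht; exact ⟨by omega, ⟨t, by omega⟩⟩
    · obtain ⟨s, rfl⟩ : ∃ s, t = s + 1 := ⟨t - 1, by omega⟩
      obtain rfl : b = 2 * s + 1 := by omega
      ring_nf at ht; omega
  · rintro ⟨rfl, t, rfl⟩
    exact ⟨t, by ring⟩

lemma sum_range_two_mul_ite_even {M : Type*} [AddCommMonoid M] (h : ℕ → M) (n : ℕ) :
    ∑ a ∈ range (2 * n), (if Even a then h a else 0) = ∑ j ∈ range n, h (2 * j) := by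
  induction n with
  | zero => simp
  | succ n ih =>
    rw [show 2 * (n + 1) = 2 * n + 1 + 1 by ring, sum_range_succ, sum_range_succ, ih,
      sum_range_succ, if_pos (even_two_mul n), if_neg (Nat.not_even_two_mul_add_one n), add_zero]

section Hermitian

variable {F : Type} [Field F] {p k q : ℕ} [ExpChar F p]

lemma eval_pow_eq_sum_range_of_expChar (hq : p ^ k = q) {g : F[X]} {N : ℕ} (hg : g.natDegree < N)
    (x : F) : g.eval x ^ q = ∑ b ∈ range N, g.coeff b ^ q * x ^ (q * b) := by
  subst hq
  rw [eval_eq_sum_range' hg, sum_pow_char_pow]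
  simp_rw [mul_pow, ← pow_mul, mul_comm _ (p ^ k)]

lemma sum_eval_mul_eval_pow_eq (hq : p ^ k = q) {ω : F} {n : ℕ} (hω : IsPrimitiveRoot ω n)
    {f g : F[X]} {N : ℕ} (hf : f.natDegree < N) (hg : g.natDegree < N) :
    ∑ j : Fin n, f.eval (ω ^ (j : ℕ)) * g.eval (ω ^ (j : ℕ)) ^ q =
      ∑ a ∈ range N, ∑ b ∈ range N,
        f.coeff a * g.coeff b ^ q * if n ∣ a + q * b then (n : F) else 0 := by
  simp_rw [eval_pow_eq_sum_range_of_expChar hq hg, eval_eq_sum_range' hf, sum_mul_sum,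
    ← hω.sum_fin_pow_pow, mul_sum]
  rw [sum_comm]
  refine sum_congr rfl fun a _ => ?_
  rw [sum_comm]
  exact sum_congr rfl fun b _ => sum_congr rfl fun j _ => by ring

lemma sum_eval_mul_eval_pow_eq_two_mul (hq : p ^ k = q) (hodd : Odd q) (hq0 : (q : F) = 0)
    {ω : F} (hω : IsPrimitiveRoot ω (2 * (q + 1))) {f g : F[X]} (hf : f.natDegree ≤ q + 1)
    (hg : g.natDegree ≤ q + 1) {N : ℕ} (hfN : f.natDegree < N) (hgN : g.natDegree < N) :
    ∑ j : Fin (2 * (q + 1)), f.eval (ω ^ (j : ℕ)) * g.eval (ω ^ (j : ℕ)) ^ q =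
      2 * ∑ a ∈ range N, if Even a then f.coeff a * g.coeff a ^ q else 0 := by
  have hn : ((2 * (q + 1) : ℕ) : F) = 2 := by push_cast; rw [hq0]; ring
  have hterm : ∀ a b, (f.coeff a * g.coeff b ^ q *
      if 2 * (q + 1) ∣ a + q * b then ((2 * (q + 1) : ℕ) : F) else 0) =
      if a = b then 2 * (if Even a then f.coeff a * g.coeff a ^ q else 0) else 0 := by
    intro a b
    by_cases hab : a ≤ q + 1 ∧ b ≤ q + 1
    · simp only [two_mul_succ_dvd_add_mul_iff hodd hab.1 hab.2, hn]
      rcases eq_or_ne a b with rfl | h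
      · by_cases he : Even a <;> simp [he, mul_comm]
      · simp [h]
    · have h0 : f.coeff a * g.coeff b ^ q = 0 := by
        rcases not_and_or.1 hab with h | h
        · simp [coeff_eq_zero_of_natDegree_lt (by omega : f.natDegree < a)]
        · simp [coeff_eq_zero_of_natDegree_lt (by omega : g.natDegree < b), hodd.pos.ne']
      rcases eq_or_ne a b with rfl | h
      · simp [h0]
      · simp [h, h0]
  rw [sum_eval_mul_eval_pow_eq hq hω hfN hgN, mul_sum]
  refine sum_congr rfl fun a ha => ?_
  simp_rw [hterm a, sum_ite_eq, if_pos ha]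

end Hermitian

section Code

variable {F : Type} [Field F]

noncomputable def extEvalMap (ω c : F) (n i : ℕ) : F[X] →ₗ[F] (Fin (n + i) → F) where
  toFun f := Fin.append (fun j : Fin n => f.eval (ω ^ (j : ℕ))) fun j : Fin i => c * f.coeff (2 * j)
  map_add' f g := by
    ext k
    refine Fin.addCases (fun j => ?_) (fun j => ?_) k <;> simp [mul_add]
  map_smul' a f := by
    ext k
    refine Fin.addCases (fun j => ?_) (fun j => ?_) k <;> simp [mul_left_comm]

lemma extEvalMap_apply (ω c : F) (n i : ℕ) (f : F[X]) :
    extEvalMap ω c n i f =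
      Fin.append (fun j : Fin n => f.eval (ω ^ (j : ℕ))) fun j : Fin i => c * f.coeff (2 * j) :=
  rfl

/-- For `c ^ (q + 1) = -2` the `i` extra coordinates `c * f.coeff (2 * j)` cancel the
contribution `2 * ∑ a even, f.coeff a * (g.coeff a) ^ q` of the evaluation coordinates to the
Hermitian product (`sum_eval_mul_eval_pow_eq_two_mul`). -/
noncomputable def extEvalCode (ω c : F) (n i : ℕ) : Submodule F (Fin (n + i) → F) :=
  (degreeLT F (i + 2)).map (extEvalMap ω c n i)

variable {ω c : F} {n i : ℕ}

lemma sub_le_hammingNorm_extEvalMap [DecidableEq F] (hω : IsPrimitiveRoot ω n) (hc : c ≠ 0)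
    (hi : i ≠ 0) {f : F[X]} (hf : f ∈ degreeLT F (i + 2)) (hf0 : f ≠ 0) :
    n - i ≤ hammingNorm (extEvalMap ω c n i f) := by
  have hdeg := natDegree_le_of_mem_degreeLT_succ hf
  have hP : Function.Injective fun j : Fin n => ω ^ (j : ℕ) :=
    fun j j' h => Fin.ext (hω.pow_inj j.2 j'.2 h)
  rw [extEvalMap_apply, hammingNorm_append]
  by_cases h0 : f.coeff 0 = 0
  · have hP0 (j : Fin n) : ω ^ (j : ℕ) ≠ 0 := pow_ne_zero _ (hω.ne_zero (Fin.pos j).ne')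
    have := card_add_one_sub_natDegree_le_hammingNorm_eval hP hP0 hf0 h0
    rw [Fintype.card_fin] at this
    omega
  · have heval := card_sub_natDegree_le_hammingNorm_eval hP hf0
    have hextra : 0 < hammingNorm fun j : Fin i => c * f.coeff (2 * j) :=
      hammingNorm_pos_iff.2 fun h => mul_ne_zero hc h0 (by simpa using congr_fun h ⟨0, by omega⟩)
    rw [Fintype.card_fin] at heval
    omega

lemma extEvalMap_ne_zero [DecidableEq F] (hω : IsPrimitiveRoot ω n) (hc : c ≠ 0) (hi : i ≠ 0)
    (hin : i < n) {f : F[X]} (hf : f ∈ degreeLT F (i + 2)) (hf0 : f ≠ 0) :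
    extEvalMap ω c n i f ≠ 0 := fun h => by
  have := sub_le_hammingNorm_extEvalMap hω hc hi hf hf0
  rw [h, hammingNorm_zero] at this
  omega

lemma sub_le_hammingNorm_of_mem_extEvalCode [DecidableEq F] (hω : IsPrimitiveRoot ω n)
    (hc : c ≠ 0) (hi : i ≠ 0) {x : Fin (n + i) → F} (hx : x ∈ extEvalCode ω c n i) (hx0 : x ≠ 0) :
    n - i ≤ hammingNorm x := by
  obtain ⟨f, hf, rfl⟩ := Submodule.mem_map.1 hx
  exact sub_le_hammingNorm_extEvalMap hω hc hi hf fun h => hx0 (by rw [h, map_zero])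

lemma finrank_extEvalCode (hω : IsPrimitiveRoot ω n) (hc : c ≠ 0) (hi : i ≠ 0) (hin : i < n) :
    Module.finrank F (extEvalCode ω c n i) = i + 2 := by
  classical
  have hinj : Function.Injective ((extEvalMap ω c n i).domRestrict (degreeLT F (i + 2))) := by
    refine (injective_iff_map_eq_zero _).2 fun f hf => ?_
    by_contra hf0
    exact extEvalMap_ne_zero hω hc hi hin f.2 (fun h => hf0 (Subtype.ext h)) hf
  rw [extEvalCode, ← LinearMap.range_domRestrict, LinearMap.finrank_range_of_inj hinj,
    (degreeLTEquiv F (i + 2)).finrank_eq, Module.finrank_fin_fun]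

lemma hammingNorm_extEvalMap_X_pow_three_sub_X_le [DecidableEq F] {m : ℕ} (hm : m ≠ 0)
    (hω : IsPrimitiveRoot ω (2 * m)) :
    hammingNorm (extEvalMap ω c (2 * m) i (X ^ 3 - X)) ≤ 2 * m - 2 := by
  rw [extEvalMap_apply, hammingNorm_append]
  have hextra : (fun j : Fin i => c * (X ^ 3 - X : F[X]).coeff (2 * j)) = 0 := by
    ext j
    simp only [coeff_sub, coeff_X_pow, coeff_X, if_neg (by omega : 2 * (j : ℕ) ≠ 3),
      if_neg (by omega : 1 ≠ 2 * (j : ℕ)), sub_zero, mul_zero, Pi.zero_apply]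
  have hroots : ∀ j ∈ ({⟨0, by omega⟩, ⟨m, by omega⟩} : Finset (Fin (2 * m))),
      (X ^ 3 - X : F[X]).eval (ω ^ (j : ℕ)) = 0 := by
    simp only [mem_insert, mem_singleton]
    rintro j (rfl | rfl)
    · simp
    · have h : (ω ^ m) ^ 2 = 1 := by rw [← pow_mul, mul_comm, hω.pow_eq_one]
      simp only [eval_sub, eval_pow, eval_X]
      linear_combination ω ^ m * h
  have heval := hammingNorm_le_card_sub_card _ hroots
  rw [card_pair (by simp [Fin.ext_iff]; omega), Fintype.card_fin] at heval
  rw [hextra, hammingNorm_zero, add_zero]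
  exact heval

lemma hasMinDist_extEvalCode_two [DecidableEq F] {m : ℕ} (hm : 2 ≤ m)
    (hω : IsPrimitiveRoot ω (2 * m)) (hc : c ≠ 0) :
    HasMinDist (extEvalCode ω c (2 * m) 2 : Set (Fin (2 * m + 2) → F)) (2 * m - 2) := by
  have hdeg : (X ^ 3 - X : F[X]) ∈ degreeLT F (2 + 2) := by
    rw [mem_degreeLT, degree_eq_natDegree (FiniteField.X_pow_card_sub_X_ne_zero F (by norm_num)),
      FiniteField.X_pow_card_sub_X_natDegree_eq F (by norm_num)]
    norm_num
  have hmem := Submodule.mem_map_of_mem (f := extEvalMap ω c (2 * m) 2) hdeg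
  have hne := extEvalMap_ne_zero hω hc two_ne_zero (by omega) hdeg
    (FiniteField.X_pow_card_sub_X_ne_zero F (by norm_num))
  have hlow (x) (hx : x ∈ extEvalCode ω c (2 * m) 2) (hx0 : x ≠ 0) :=
    sub_le_hammingNorm_of_mem_extEvalCode hω hc two_ne_zero hx hx0
  have hweight : hammingNorm (extEvalMap ω c (2 * m) 2 (X ^ 3 - X)) = 2 * m - 2 :=
    (hammingNorm_extEvalMap_X_pow_three_sub_X_le (by omega) hω).antisymm (hlow _ hmem hne)
  rw [← hweight]
  exact hasMinDist_hammingNorm hmem hne fun x hx hx0 => hweight ▸ hlow x hx hx0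

lemma exists_hasMinDist_extEvalCode [DecidableEq F] (hω : IsPrimitiveRoot ω n) (hc : c ≠ 0)
    (hi : i ≠ 0) (hin : i < n) :
    ∃ d, n - i ≤ d ∧ HasMinDist (extEvalCode ω c n i : Set (Fin (n + i) → F)) d := by
  have hone : (1 : F[X]) ∈ degreeLT F (i + 2) := by
    rw [mem_degreeLT, degree_one]
    exact_mod_cast (i + 1).succ_pos
  obtain ⟨d, hd⟩ := exists_hasMinDist
    ⟨_, Submodule.mem_map_of_mem hone, extEvalMap_ne_zero hω hc hi hin hone one_ne_zero⟩
  obtain ⟨x, hx, hx0, rfl⟩ := hd.1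
  exact ⟨_, sub_le_hammingNorm_of_mem_extEvalCode hω hc hi hx hx0, hd⟩

lemma hermInner_extEvalMap_eq_zero {p k q : ℕ} [ExpChar F p] (hq : p ^ k = q) (hodd : Odd q)
    (hq0 : (q : F) = 0) (hω : IsPrimitiveRoot ω (2 * (q + 1))) (hc : c ^ (q + 1) = -2)
    (hi : 2 ≤ i) (hiq : i ≤ q) {f g : F[X]} (hf : f ∈ degreeLT F (i + 2))
    (hg : g ∈ degreeLT F (i + 2)) :
    hermInner q (extEvalMap ω c (2 * (q + 1)) i f) (extEvalMap ω c (2 * (q + 1)) i g) = 0 := by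
  have hf' := natDegree_le_of_mem_degreeLT_succ hf
  have hg' := natDegree_le_of_mem_degreeLT_succ hg
  have hextra : hermInner q (fun j : Fin i => c * f.coeff (2 * j))
      (fun j : Fin i => c * g.coeff (2 * j)) =
      -2 * ∑ a ∈ range (2 * i), if Even a then f.coeff a * g.coeff a ^ q else 0 := by
    rw [sum_range_two_mul_ite_even, ← hc, mul_sum, hermInner,
      Fin.sum_univ_eq_sum_range (fun j => c * f.coeff (2 * j) * (c * g.coeff (2 * j)) ^ q)]
    exact sum_congr rfl fun j _ => by ring
  rw [extEvalMap_apply, extEvalMap_apply, hermInner_append, hermInner, hextra,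
    sum_eval_mul_eval_pow_eq_two_mul hq hodd hq0 hω (by omega) (by omega) (N := 2 * i)
      (by omega) (by omega)]
  ring

lemma isHermSelfOrth_extEvalCode {p k q : ℕ} [ExpChar F p] (hq : p ^ k = q) (hodd : Odd q)
    (hq0 : (q : F) = 0) (hω : IsPrimitiveRoot ω (2 * (q + 1))) (hc : c ^ (q + 1) = -2)
    (hi : 2 ≤ i) (hiq : i ≤ q) : IsHermSelfOrth q (extEvalCode ω c (2 * (q + 1)) i) := by
  rintro _ ⟨g, hg, rfl⟩ _ ⟨f, hf, rfl⟩
  exact hermInner_extEvalMap_eq_zero hq hodd hq0 hω hc hi hiq hf hg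

end Code

/-- for `q` an odd prime power, (i) there is an AMDS Hermitian
self-orthogonal `[2(q+1)+2, 4, 2q]` code over `F_{q²}`, and (ii) for `2 ≤ i ≤ q`
there is a Hermitian self-orthogonal `[2(q+1)+i, 2+i, d]` code with `d ≥ 2q+2-i`. -/
theorem herm_self_orth_two_q_plus_one_family
    (q : ℕ) (hq : IsPrimePow q) (hodd : Odd q)
    (F : Type) [Field F] [Fintype F] [DecidableEq F]
    (hF : Fintype.card F = q ^ 2) :
    (∃ C : Submodule F (Fin (2 * (q + 1) + 2) → F),
      IsHermSelfOrth q C ∧ Module.finrank F C = 4 ∧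
        HasMinDist (C : Set (Fin (2 * (q + 1) + 2) → F)) (2 * q)) ∧
    (∀ i : ℕ, 2 ≤ i → i ≤ q →
      ∃ C : Submodule F (Fin (2 * (q + 1) + i) → F),
        IsHermSelfOrth q C ∧ Module.finrank F C = 2 + i ∧
          ∃ d : ℕ, 2 * q + 2 - i ≤ d ∧
            HasMinDist (C : Set (Fin (2 * (q + 1) + i) → F)) d) := by
  obtain ⟨p, k, hp, hpk⟩ := FiniteField.exists_expChar_pow_eq hq two_ne_zero hF
  have hq0 : (q : F) = 0 := FiniteField.natCast_eq_zero_of_card_eq_pow two_ne_zero hF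
  obtain ⟨ω, hω⟩ := FiniteField.exists_isPrimitiveRoot_two_mul_succ hodd hF
  obtain ⟨c, hc0, hc⟩ := FiniteField.exists_pow_succ_eq_neg_two hpk hodd hF
  have hq2 : 2 ≤ q := hq.two_le
  refine ⟨⟨extEvalCode ω c _ 2, isHermSelfOrth_extEvalCode hpk hodd hq0 hω hc le_rfl hq2,
    finrank_extEvalCode hω hc0 two_ne_zero (by omega), ?_⟩,
    fun i hi hiq => ⟨extEvalCode ω c _ i, isHermSelfOrth_extEvalCode hpk hodd hq0 hω hc hi hiq,
      (finrank_extEvalCode hω hc0 (by omega) (by omega)).trans (add_comm i 2), ?_⟩⟩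
  · have h := hasMinDist_extEvalCode_two (m := q + 1) (by omega) hω hc0
    rwa [show 2 * (q + 1) - 2 = 2 * q by omega] at h
  · obtain ⟨d, hd, hmin⟩ := exists_hasMinDist_extEvalCode (i := i) hω hc0 (by omega) (by omega)
    exact ⟨d, by omega, hmin⟩
end
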